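/- arXiv:2308.09883 — 5 statements merged into one kernel-verified Lean document; each statement's English description precedes it below -/
import Mathlib

section
/- Resharing preserves the secret: suppose s_u = p(u) for u in a set D of at least ℓ+1 nonzero points, where deg p ≤ ℓ and p(0) = SK. Each u ∈ D shares s_u via a degree-ℓ polynomial p*_u with p*_u(0) = s_u, giving party j the value p*_u(j). Define the new share s'_j = Σ_{u∈D} β_u · p*_u(j), where β_u are the Lagrange coefficients of D at 0. Then the polynomial q(X) = Σ_{u∈D} β_u · p*_u(X) has degree at most ℓ and satisfies q(0) = SK, and s'_j = q(j); i.e., the new shares are a valid degree-ℓ sharing of the same secret SK. -/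
lemma beta_eval_basis (q : ℕ) [Fact q.Prime] (D : Finset (ZMod q)) (u : ZMod q)
    (hu : u ∈ D) :
    (Lagrange.basis D id u).eval 0 = ∏ v ∈ D.erase u, v / (v - u) := by
  rw [Lagrange.basis, Polynomial.eval_prod]
  refine Finset.prod_congr rfl fun v hv => ?_
  have hne : u ≠ v := fun h => (Finset.mem_erase.mp hv).1 h.symm
  simp only [Lagrange.basisDivisor, Polynomial.eval_mul, Polynomial.eval_C,
    Polynomial.eval_sub, Polynomial.eval_X, id]
  rw [zero_sub, div_eq_mul_inv, ← neg_sub u v, inv_neg]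
  ring

/-- Resharing preserves the secret: the linear combination of the resharing
polynomials is a degree-ℓ sharing of the original secret SK. -/
theorem stmt9 (q : ℕ) [Fact q.Prime] (ℓ : ℕ)
    (p : Polynomial (ZMod q)) (hp : p.degree ≤ ℓ)
    (SK : ZMod q) (hSK : p.eval 0 = SK)
    (D : Finset (ZMod q)) (h0 : (0 : ZMod q) ∉ D) (hcard : ℓ + 1 ≤ D.card)
    (pstar : ZMod q → Polynomial (ZMod q))
    (hdeg : ∀ u ∈ D, (pstar u).degree ≤ ℓ)
    (hshare : ∀ u ∈ D, (pstar u).eval 0 = p.eval u)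
    (β : ZMod q → ZMod q) (hβ : ∀ u ∈ D, β u = ∏ v ∈ D.erase u, v / (v - u)) :
    (∑ u ∈ D, Polynomial.C (β u) * pstar u).degree ≤ ℓ ∧
    (∑ u ∈ D, Polynomial.C (β u) * pstar u).eval 0 = SK ∧
    ∀ j : ZMod q, (∑ u ∈ D, Polynomial.C (β u) * pstar u).eval j
      = ∑ u ∈ D, β u * (pstar u).eval j := by
  refine ⟨?_, ?_, fun j => by simp [Polynomial.eval_finset_sum]⟩
  · refine (Polynomial.degree_sum_le _ _).trans ?_
    simp only [Finset.sup_le_iff]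
    intro u hu
    refine (Polynomial.degree_mul_le _ _).trans ?_
    refine (add_le_add Polynomial.degree_C_le (hdeg u hu)).trans ?_
    simp
  · have hinj : Set.InjOn (id : ZMod q → ZMod q) D := Set.injOn_id _
    have hdlt : p.degree < D.card := lt_of_le_of_lt hp (by exact_mod_cast hcard)
    have hinterp := Lagrange.eq_interpolate hinj hdlt
    have key : p.eval 0 = ∑ u ∈ D, β u * p.eval u := by
      conv_lhs => rw [hinterp]
      rw [Lagrange.interpolate_apply, Polynomial.eval_finset_sum]
      refine Finset.sum_congr rfl fun u hu => ?_
      rw [Polynomial.eval_mul, Polynomial.eval_C, beta_eval_basis q D u hu, ← hβ u hu,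
        id]
      ring
    rw [Polynomial.eval_finset_sum]
    simp only [Polynomial.eval_mul, Polynomial.eval_C]
    rw [← hSK, key]
    exact Finset.sum_congr rfl fun u hu => by rw [hshare u hu]
end

section
/- Gilbert's recursion for random graph connectivity: let g(n, ε) be the probability that the Erdős–Rényi random graph G(n, ε) (each edge present independently with probability ε) is disconnected, for n ≥ 1 with g(1, ε) = 0. Then 1 − g(n, ε) = 1 − Σ_{i=1}^{n−1} C(n−1, i−1) · (1 − g(i, ε)) · (1−ε)^{i(n−i)}, i.e., the probability that the component containing a fixed vertex has size i and is internally arbitrary but isolated from the remaining n−i vertices sums correctly over i. -/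
open MeasureTheory ENNReal

noncomputable section

/-- Potential edges of a graph on `Fin n`: non-diagonal unordered pairs. -/
def EdgeSlots (n : ℕ) : Type := {e : Sym2 (Fin n) // ¬ e.IsDiag}

instance (n : ℕ) : Fintype (EdgeSlots n) := by unfold EdgeSlots; infer_instance

/-- The graph determined by a choice of present edges. -/
def graphOf {n : ℕ} (ω : EdgeSlots n → Bool) : SimpleGraph (Fin n) where
  Adj i j := ∃ h : i ≠ j, ω ⟨s(i, j), by simpa using h⟩ = true
  symm := by
    constructor
    rintro i j ⟨h, hw⟩
    refine ⟨h.symm, ?_⟩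
    have : (⟨s(j, i), by simpa using h.symm⟩ : EdgeSlots n)
        = ⟨s(i, j), by simpa using h⟩ := Subtype.ext (Sym2.eq_swap)
    rw [this]; exact hw
  loopless := by constructor; rintro i ⟨h, _⟩; exact h rfl

/-- The Erdős–Rényi measure `G(n, ε)`: each potential edge present
independently with probability ε. -/
def gnp (n : ℕ) (ε : ℝ≥0∞) (hε : ε ≤ 1) : Measure (EdgeSlots n → Bool) :=
  Measure.pi fun _ => (PMF.ofFintype (fun b => cond b ε (1 - ε)) (by simp [hε])).toMeasure

/-- Probability that `G(n, ε)` is disconnected. -/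
def disconnProb (n : ℕ) (ε : ℝ≥0∞) (hε : ε ≤ 1) : ℝ≥0∞ :=
  gnp n ε hε {ω | ¬ (graphOf ω).Connected}

/-!
Fix the vertex `0`. As `S` ranges over the vertex sets containing `0`, the events "the connected
component of `0` is `S`" partition the sample space. Such an event says that the graph induced on
`S` is connected and that no edge joins `S` to its complement. These two conditions read disjoint
sets of edge slots, so they are independent; relabelling `S` as `Fin |S|`, the first has
probability `1 - g(|S|, ε)`, and the second `(1 - ε) ^ (|S| (n - |S|))`. Grouping the sets `S` by
size gives `∑_{i=1}^{n} C(n-1, i-1) (1 - g(i, ε)) (1 - ε)^(i (n - i)) = 1`, whose term `i = n`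
is `1 - g(n, ε)`.
-/

namespace SimpleGraph
variable {V : Type*} {G : SimpleGraph V}

theorem supp_connectedComponentMk_eq_iff {s : Set V} {v : V} (hv : v ∈ s) :
    (G.connectedComponentMk v).supp = s ↔
      (∀ a ∈ s, ∀ b ∉ s, ¬G.Adj a b) ∧ (G.induce s).Connected := by
  constructor
  · rintro rfl
    exact ⟨fun a ha b hb hab => hb ((ConnectedComponent.mem_supp_congr_adj _ hab).mp ha),
      ConnectedComponent.connected_toSimpleGraph _⟩
  · rintro ⟨hclosed, hconn⟩
    ext w
    rw [ConnectedComponent.mem_supp_iff, ConnectedComponent.eq]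
    refine ⟨fun ⟨p⟩ => ?_, fun hw => ?_⟩
    · by_contra hw
      obtain ⟨d, -, hd, hd'⟩ := p.reverse.exists_boundary_dart s hv hw
      exact hclosed _ hd _ hd' d.adj
    · exact (hconn.preconnected ⟨w, hw⟩ ⟨v, hv⟩).map (Embedding.induce s).toHom

theorem connected_comap_iff_connected_induce_range {W : Type*} {G : SimpleGraph W} (f : V ↪ W) :
    (G.comap f).Connected ↔ (G.induce (Set.range f)).Connected :=
  (Embedding.comap f G).isoInduceRange.connected_iff

end SimpleGraph

namespace MeasureTheory.Measure
variable {ι : Type*} [Fintype ι]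

theorem pi_restrict_inter_restrict_compl {α : ι → Type*} [∀ i, MeasurableSpace (α i)]
    (μ : ∀ i, Measure (α i)) [∀ i, SigmaFinite (μ i)] (p : ι → Prop) [DecidablePred p]
    {E : Set (∀ i : {i // p i}, α i)} {F : Set (∀ i : {i // ¬p i}, α i)}
    (hE : MeasurableSet E) (hF : MeasurableSet F) :
    Measure.pi μ
        ({ω | (fun i : {i // p i} => ω i) ∈ E} ∩ {ω | (fun i : {i // ¬p i} => ω i) ∈ F})
      = Measure.pi (fun i : {i // p i} => μ i) E
        * Measure.pi (fun i : {i // ¬p i} => μ i) F := by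
  rw [← prod_prod, ← (measurePreserving_piEquivPiSubtypeProd μ p).measure_preimage
    (hE.prod hF).nullMeasurableSet]
  rfl

theorem pi_setOf_comp_equiv_mem {κ β : Type*} [Fintype κ] [MeasurableSpace β] (ν : Measure β)
    [SigmaFinite ν] (e : κ ≃ ι) {E : Set (κ → β)} (hE : MeasurableSet E) :
    Measure.pi (fun _ : ι => ν) {ω | ω ∘ e ∈ E} = Measure.pi (fun _ : κ => ν) E := by
  have hmeas : MeasurableSet {ω : ι → β | ω ∘ e ∈ E} :=
    hE.preimage (measurable_pi_lambda _ fun k => measurable_pi_apply _)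
  rw [← (measurePreserving_piCongrLeft (fun _ : ι => ν) e).measure_preimage
    hmeas.nullMeasurableSet]
  congr 1
  ext g
  simp [Function.comp_def, MeasurableEquiv.coe_piCongrLeft, Equiv.piCongrLeft_apply_apply]

theorem pi_setOf_forall_imp_mem {β : Type*} [MeasurableSpace β] (ν : Measure β)
    [IsProbabilityMeasure ν] (q : ι → Prop) (s : Set β) :
    Measure.pi (fun _ : ι => ν) {ω | ∀ i, q i → ω i ∈ s}
      = ν s ^ Nat.card {i // q i} := by
  classical
  have : {ω : ι → β | ∀ i, q i → ω i ∈ s}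
      = Set.univ.pi fun i => if q i then s else Set.univ := by
    ext ω
    simp only [Set.mem_ofPred_eq, Set.mem_pi, Set.mem_univ, true_implies]
    exact forall_congr' fun i => by split_ifs with h <;> simp [h]
  simp [this, pi_pi, apply_ite ν, Finset.prod_ite, Nat.card_eq_fintype_card, Fintype.card_subtype]

end MeasureTheory.Measure

namespace Finset

theorem sum_filter_mem_apply_card {α M : Type*} [Fintype α] [DecidableEq α]
    [AddCommMonoid M] (a : α) (f : ℕ → M) :
    ∑ S : Finset α with a ∈ S, f #S
      = ∑ k ∈ range (Fintype.card α), (Fintype.card α - 1).choose k • f (k + 1) := by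
  calc ∑ S : Finset α with a ∈ S, f #S = ∑ T ∈ (univ.erase a).powerset, f (#T + 1) := by
        refine sum_nbij' (·.erase a) (insert a) (fun S _ => ?_) (fun T _ => ?_)
          (fun S hS => ?_) (fun T hT => ?_) (fun S hS => ?_)
        · simpa using erase_subset_erase a (subset_univ S)
        · simp
        · exact insert_erase (mem_filter.mp hS).2
        · exact erase_insert fun ha => by simpa using mem_powerset.mp hT ha
        · rw [card_erase_add_one (mem_filter.mp hS).2]
    _ = _ := by
        rw [sum_powerset_apply_card (fun k => f (k + 1)), card_erase_of_mem (mem_univ a), card_univ,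
          Nat.sub_add_cancel (Fintype.card_pos_iff.mpr ⟨a⟩)]

end Finset

namespace EdgeSlots
open Finset
variable {m n : ℕ}

def map (f : Fin m ↪ Fin n) (e : EdgeSlots m) : EdgeSlots n :=
  ⟨e.1.map f, by rw [Sym2.isDiag_map f.injective]; exact e.2⟩

theorem map_injective (f : Fin m ↪ Fin n) : Function.Injective (map f) :=
  fun _ _ h => Subtype.ext (Sym2.map.injective f.injective (congrArg Subtype.val h))

def IsInside (U : Set (Fin n)) (e : EdgeSlots n) : Prop := ∀ v ∈ e.1, v ∈ U

def IsCrossing (U : Set (Fin n)) (e : EdgeSlots n) : Prop := ∃ a ∈ U, ∃ b ∉ U, e.1 = s(a, b)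

theorem IsCrossing.not_isInside {U : Set (Fin n)} {e : EdgeSlots n} (he : IsCrossing U e) :
    ¬IsInside U e := by
  obtain ⟨a, -, b, hb, hab⟩ := he
  exact fun hin => hb (hin b (hab ▸ Sym2.mem_mk_right a b))

theorem isInside_map (f : Fin m ↪ Fin n) (e : EdgeSlots m) :
    IsInside (Set.range f) (map f e) := by
  intro v hv
  obtain ⟨a, -, rfl⟩ := Sym2.mem_map.mp hv
  exact Set.mem_range_self a

theorem exists_map_eq_of_isInside (f : Fin m ↪ Fin n) {e : EdgeSlots n}
    (he : IsInside (Set.range f) e) : ∃ e', map f e' = e := by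
  obtain ⟨z, hz⟩ := e
  induction z using Sym2.ind with
  | _ a b =>
    obtain ⟨a', rfl⟩ := he a (Sym2.mem_mk_left _ b)
    obtain ⟨b', rfl⟩ := he _ (Sym2.mem_mk_right _ b)
    refine ⟨⟨s(a', b'), ?_⟩, rfl⟩
    simpa [f.injective.eq_iff] using hz

def equivIsInside (f : Fin m ↪ Fin n) :
    EdgeSlots m ≃ {e : EdgeSlots n // IsInside (Set.range f) e} :=
  Equiv.ofBijective (fun e => ⟨map f e, isInside_map f e⟩)
    ⟨fun _ _ h => map_injective f (congrArg Subtype.val h),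
      fun e => (exists_map_eq_of_isInside f e.2).imp fun _ h => Subtype.ext h⟩

theorem card_isCrossing (S : Finset (Fin n)) :
    Nat.card {e : EdgeSlots n // IsCrossing ↑S e} = #S * (n - #S) := by
  classical
  have hcompl : #Sᶜ = n - #S := by simp [card_compl]
  rw [Nat.card_eq_fintype_card, Fintype.card_subtype, ← hcompl, ← card_product]
  symm
  refine card_bij (fun p hp => ⟨s(p.1, p.2), ?_⟩) (fun p hp => ?_) (fun p hp q hq hpq => ?_) ?_
  · simp only [mem_product, mem_compl] at hp
    exact fun h => hp.2 (Sym2.mk_isDiag_iff.mp h ▸ hp.1)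
  · simp only [mem_product, mem_compl] at hp
    exact mem_filter.mpr ⟨mem_univ _, p.1, hp.1, p.2, hp.2, rfl⟩
  · simp only [mem_product, mem_compl] at hp hq
    rcases Sym2.eq_iff.mp (congrArg Subtype.val hpq) with ⟨h1, h2⟩ | ⟨h1, -⟩
    · exact Prod.ext h1 h2
    · exact absurd (h1 ▸ hp.1) hq.2
  · rintro e he
    obtain ⟨a, ha, b, hb, hab⟩ := (mem_filter.mp he).2
    exact ⟨(a, b), by simpa using ⟨ha, hb⟩, Subtype.ext hab.symm⟩

end EdgeSlots

section Gilbert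
open EdgeSlots Finset

theorem graphOf_comp_map {m n : ℕ} (ω : EdgeSlots n → Bool) (f : Fin m ↪ Fin n) :
    graphOf (ω ∘ EdgeSlots.map f) = (graphOf ω).comap f := by
  ext a b
  simp only [graphOf, SimpleGraph.comap_adj, Ne, f.injective.eq_iff]
  exact exists_congr fun _ => Iff.rfl

theorem forall_not_adj_graphOf_iff {n : ℕ} (ω : EdgeSlots n → Bool) (U : Set (Fin n)) :
    (∀ a ∈ U, ∀ b ∉ U, ¬(graphOf ω).Adj a b)
      ↔ ∀ e, IsCrossing U e → ω e = false := by
  constructor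
  · rintro h ⟨_, _⟩ ⟨a, ha, b, hb, rfl⟩
    refine Bool.eq_false_iff.mpr fun hω => h a ha b hb ⟨?_, hω⟩
    rintro rfl
    exact hb ha
  · rintro h a ha b hb ⟨hab, hω⟩
    have hcross : IsCrossing U (⟨s(a, b), by simpa using hab⟩ : EdgeSlots n) :=
      ⟨a, ha, b, hb, rfl⟩
    exact Bool.false_ne_true ((h _ hcross).symm.trans hω)

variable (ε : ℝ≥0∞) (hε : ε ≤ 1)

def edgeLaw : Measure Bool :=
  (PMF.ofFintype (fun b => cond b ε (1 - ε)) (by simp [hε])).toMeasure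

instance : IsProbabilityMeasure (edgeLaw ε hε) := PMF.toMeasure.isProbabilityMeasure _

theorem edgeLaw_singleton_false : edgeLaw ε hε {false} = 1 - ε := by
  rw [edgeLaw, PMF.toMeasure_apply_singleton _ _ (measurableSet_singleton _)]
  rfl

theorem gnp_eq_pi (n : ℕ) : gnp n ε hε = Measure.pi fun _ => edgeLaw ε hε := rfl

instance (n : ℕ) : IsProbabilityMeasure (gnp n ε hε) := by
  rw [gnp_eq_pi]; infer_instance

theorem gnp_connected (n : ℕ) :
    gnp n ε hε {ω | (graphOf ω).Connected} = 1 - disconnProb n ε hε := by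
  rw [disconnProb, ← prob_compl_eq_one_sub .of_discrete, Set.compl_ofPred]
  simp_rw [not_not]

theorem gnp_setOf_supp_eq_range {m n : ℕ} (f : Fin m ↪ Fin n) {v : Fin n}
    (hv : v ∈ Set.range f) :
    gnp n ε hε {ω | ((graphOf ω).connectedComponentMk v).supp = Set.range f}
      = (1 - disconnProb m ε hε) * (1 - ε) ^ (m * (n - m)) := by
  classical
  have hevent : {ω | ((graphOf ω).connectedComponentMk v).supp = Set.range f}
      = {ω | (fun e : {e // IsInside (Set.range f) e} => ω e) ∈
            {g | g ∘ equivIsInside f ∈ {h | (graphOf h).Connected}}}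
        ∩ {ω | (fun e : {e // ¬IsInside (Set.range f) e} => ω e) ∈
            {g | ∀ e, IsCrossing (Set.range f) e.1 → g e ∈ ({false} : Set Bool)}} := by
    ext ω
    rw [Set.mem_ofPred_eq, SimpleGraph.supp_connectedComponentMk_eq_iff hv,
      forall_not_adj_graphOf_iff, ← SimpleGraph.connected_comap_iff_connected_induce_range,
      ← graphOf_comp_map, and_comm]
    exact and_congr Iff.rfl
      ⟨fun h e he => h e.1 he, fun h e he => h ⟨e, he.not_isInside⟩ he⟩
  have hcard : Nat.card {e : {e // ¬IsInside (Set.range f) e} // IsCrossing (Set.range f) e.1}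
      = m * (n - m) := by
    rw [Nat.card_congr (Equiv.subtypeSubtypeEquivSubtype IsCrossing.not_isInside)]
    simpa using card_isCrossing (univ.map f)
  rw [hevent, gnp_eq_pi, Measure.pi_restrict_inter_restrict_compl _ _ .of_discrete .of_discrete,
    Measure.pi_setOf_comp_equiv_mem _ _ .of_discrete, ← gnp_eq_pi, gnp_connected,
    Measure.pi_setOf_forall_imp_mem, edgeLaw_singleton_false, hcard]

theorem gnp_setOf_supp_eq_coe {n : ℕ} (S : Finset (Fin n)) {v : Fin n} (hv : v ∈ S) :
    gnp n ε hε {ω | ((graphOf ω).connectedComponentMk v).supp = ↑S}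
      = (1 - disconnProb #S ε hε) * (1 - ε) ^ (#S * (n - #S)) := by
  have hrange : Set.range (S.orderEmbOfFin rfl).toEmbedding = ↑S := range_orderEmbOfFin S rfl
  rw [← hrange]
  exact gnp_setOf_supp_eq_range ε hε _ (hrange ▸ hv)

theorem sum_gnp_setOf_supp_eq_one {n : ℕ} (v : Fin n) :
    ∑ S : Finset (Fin n) with v ∈ S,
      gnp n ε hε {ω | ((graphOf ω).connectedComponentMk v).supp = ↑S} = 1 := by
  classical
  let c (ω : EdgeSlots n → Bool) := ((graphOf ω).connectedComponentMk v).supp.toFinset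
  have hfiber (S : Finset (Fin n)) :
      {ω | ((graphOf ω).connectedComponentMk v).supp = ↑S} = c ⁻¹' {S} := by
    ext ω
    simp [c, ← Finset.coe_inj]
  simp_rw [hfiber]
  rw [sum_measure_preimage_singleton _ fun _ _ => .of_discrete,
    ← measure_univ (μ := gnp n ε hε)]
  congr 1
  ext ω
  simp [c]

end Gilbert

/-- Gilbert's recursion for the connectivity probability of `G(n, ε)`. -/
theorem stmt11 (ε : ℝ≥0∞) (hε : ε ≤ 1) (n : ℕ) (hn : 1 ≤ n) :
    1 - disconnProb n ε hε
      = 1 - ∑ i ∈ Finset.Icc 1 (n - 1),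
          ((n - 1).choose (i - 1) : ℝ≥0∞) * (1 - disconnProb i ε hε)
            * (1 - ε) ^ (i * (n - i)) := by
  obtain ⟨m, rfl⟩ : ∃ m, n = m + 1 := ⟨n - 1, by omega⟩
  have hpartition := sum_gnp_setOf_supp_eq_one ε hε (0 : Fin (m + 1))
  rw [Finset.sum_congr rfl fun S hS => gnp_setOf_supp_eq_coe ε hε S (Finset.mem_filter.mp hS).2,
    Finset.sum_filter_mem_apply_card (0 : Fin (m + 1))
      fun i => (1 - disconnProb i ε hε) * (1 - ε) ^ (i * (m + 1 - i)),
    Fintype.card_fin, Finset.sum_range_succ] at hpartition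
  simp only [add_tsub_cancel_right, Nat.choose_self, one_smul, tsub_self, mul_zero, pow_zero,
    mul_one, nsmul_eq_mul] at hpartition
  rw [ENNReal.eq_sub_of_add_eq' one_ne_top ((add_comm _ _).trans hpartition),
    add_tsub_cancel_right, ← Finset.Ico_add_one_right_eq_Icc, Finset.sum_Ico_eq_sum_range,
    add_tsub_cancel_right]
  refine congrArg (1 - ·) (Finset.sum_congr rfl fun k _ => ?_)
  rw [add_comm 1 k, add_tsub_cancel_right, mul_assoc]
end
end

section
/- Erdős–Rényi connectivity threshold: for any fixed ω > 0, if ε > (1+ω)·ln(n)/n, then the probability that G(n, ε) is connected tends to 1 as n → ∞. -/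
/-!
If `G(n, ε)` is disconnected, some nonempty vertex set `S` with `|S| ≤ n / 2` sends no edge to
its complement; for a fixed `S` this has probability `(1 - ε) ^ (|S| (n - |S|))`, which is at most
`exp (-c |S| (n - |S|))` with `c = (1 + ω) log n / n`. Writing `k = |S|`, when
`(1 + ω) k ≤ ω n / 2` this is at most `n ^ (-(1 + ω / 2) k)`, and these terms sum over all `S`
to at most `(1 + n ^ (-(1 + ω / 2))) ^ n - 1 ≤ exp (n ^ (-ω / 2)) - 1`. For larger `k` the term
is at most `n ^ (-ω n / 4)`, which beats the `2 ^ n` choices of `S`.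
-/

open MeasureTheory ENNReal Filter

noncomputable section

/-- Probability that `G(n, ε)` is connected. -/
def connProb (n : ℕ) (ε : ℝ≥0∞) (hε : ε ≤ 1) : ℝ≥0∞ :=
  gnp n ε hε {ω | (graphOf ω).Connected}

open Finset

instance (n : ℕ) (ε : ℝ≥0∞) (hε : ε ≤ 1) : IsProbabilityMeasure (gnp n ε hε) := by
  unfold gnp; infer_instance

theorem gnp_forall_eq_false {n : ℕ} (ε : ℝ≥0∞) (hε : ε ≤ 1) (T : Finset (EdgeSlots n)) :
    gnp n ε hε {ω | ∀ e ∈ T, ω e = false} = (1 - ε) ^ #T := by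
  have hcyl : {ω : EdgeSlots n → Bool | ∀ e ∈ T, ω e = false} =
      (T : Set _).pi fun _ => {false} := by
    ext; simp
  rw [gnp, hcyl, Measure.pi_pi_finset, prod_const,
    PMF.toMeasure_apply_singleton _ _ (measurableSet_singleton _), PMF.ofFintype_apply]
  rfl

theorem SimpleGraph.exists_small_isolated_finset_of_not_connected {V : Type*} [Fintype V]
    [Nonempty V] {G : SimpleGraph V} (hG : ¬ G.Connected) :
    ∃ S : Finset V, S.Nonempty ∧ 2 * #S ≤ Fintype.card V ∧
      ∀ i ∈ S, ∀ j ∉ S, ¬ G.Adj i j := by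
  classical
  obtain ⟨u, w, huw⟩ : ∃ u w, ¬ G.Reachable u w := by
    simpa [SimpleGraph.connected_iff, SimpleGraph.Preconnected] using hG
  set S : Finset V := {x | G.Reachable u x}
  have hS : ∀ i ∈ S, ∀ j ∉ S, ¬ G.Adj i j := fun i hi j hj hij =>
    hj (by simpa [S] using (mem_filter.1 hi).2.trans hij.reachable)
  by_cases hsmall : 2 * #S ≤ Fintype.card V
  · exact ⟨S, ⟨u, by simp [S]⟩, hsmall, hS⟩
  · refine ⟨Sᶜ, ⟨w, by simpa [S] using huw⟩, by rw [card_compl]; omega, ?_⟩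
    intro i hi j hj hij
    exact hS j (by simpa using hj) i (mem_compl.1 hi) hij.symm

def edgeBoundary {n : ℕ} (S : Finset (Fin n)) : Finset (EdgeSlots n) :=
  ((S ×ˢ Sᶜ).image Sym2.mk.uncurry).subtype fun e : Sym2 (Fin n) => ¬ e.IsDiag

theorem card_edgeBoundary {n : ℕ} (S : Finset (Fin n)) :
    #(edgeBoundary S) = #S * (n - #S) := by
  have hne : ∀ p ∈ S ×ˢ Sᶜ, p.1 ≠ p.2 := by
    rintro ⟨i, j⟩ hp (rfl : i = j)
    simp at hp
  have hsub : #(edgeBoundary S) = #{e ∈ (S ×ˢ Sᶜ).image Sym2.mk.uncurry | ¬ e.IsDiag} :=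
    card_subtype _ _
  rw [hsub, filter_true_of_mem, card_image_of_injOn, card_product, card_compl, Fintype.card_fin]
  · rintro ⟨i, j⟩ hp ⟨i', j'⟩ hp' heq
    simp only [coe_product, coe_compl, Set.mem_prod, mem_coe, Set.mem_compl_iff] at hp hp'
    rcases Sym2.eq_iff.1 heq with ⟨rfl, rfl⟩ | ⟨rfl, rfl⟩
    · rfl
    · exact absurd hp.1 hp'.2
  · simp only [mem_image]
    rintro _ ⟨p, hp, rfl⟩
    exact Sym2.mk_isDiag_iff.not.2 (hne p hp)

theorem edgeBoundary_eq_false_of_isolated {n : ℕ} {ω : EdgeSlots n → Bool} {S : Finset (Fin n)}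
    (hS : ∀ i ∈ S, ∀ j ∉ S, ¬ (graphOf ω).Adj i j) : ∀ e ∈ edgeBoundary S, ω e = false := by
  rintro ⟨e, he⟩ hmem
  replace hmem : e ∈ (S ×ˢ Sᶜ).image Sym2.mk.uncurry := mem_subtype.1 hmem
  simp only [mem_image, mem_product, mem_compl] at hmem
  obtain ⟨⟨i, j⟩, ⟨hi, hj⟩, rfl⟩ := hmem
  by_contra hωe
  exact hS i hi j hj ⟨Sym2.mk_isDiag_iff.not.1 he, by simpa using hωe⟩

def smallVertexSets (n : ℕ) : Finset (Finset (Fin n)) := {S | S.Nonempty ∧ 2 * #S ≤ n}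

theorem gnp_not_connected_le {n : ℕ} (hn : 0 < n) (ε : ℝ≥0∞) (hε : ε ≤ 1) :
    gnp n ε hε {ω | ¬ (graphOf ω).Connected} ≤
      ∑ S ∈ smallVertexSets n, (1 - ε) ^ (#S * (n - #S)) := by
  have : Nonempty (Fin n) := ⟨⟨0, hn⟩⟩
  calc gnp n ε hε {ω | ¬ (graphOf ω).Connected}
      ≤ gnp n ε hε (⋃ S ∈ smallVertexSets n, {ω | ∀ e ∈ edgeBoundary S, ω e = false}) := by
        refine measure_mono fun ω hω => ?_
        obtain ⟨S, hne, hsmall, hS⟩ :=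
          SimpleGraph.exists_small_isolated_finset_of_not_connected hω
        exact Set.mem_biUnion (by simpa [smallVertexSets, hne] using hsmall)
          (edgeBoundary_eq_false_of_isolated hS)
    _ ≤ ∑ S ∈ smallVertexSets n, gnp n ε hε {ω | ∀ e ∈ edgeBoundary S, ω e = false} :=
        measure_biUnion_finset_le _ _
    _ = ∑ S ∈ smallVertexSets n, (1 - ε) ^ (#S * (n - #S)) := by
        simp only [gnp_forall_eq_false, card_edgeBoundary]

open Real in
theorem exp_neg_cut_le {ω L N k : ℝ} (hω : 0 < ω) (hL : 0 ≤ L) (hN : 0 < N) (hk : 0 ≤ k)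
    (hkN : 2 * k ≤ N) :
    exp (-((1 + ω) * L / N * (k * (N - k)))) ≤
      exp (-((1 + ω / 2) * L * k)) + exp (-(ω / 4 * (N * L))) := by
  rw [div_mul_eq_mul_div]
  by_cases hsmall : (1 + ω) * k ≤ ω / 2 * N
  · refine le_add_of_le_of_nonneg (exp_le_exp.2 ?_) (exp_pos _).le
    rw [neg_le_neg_iff, le_div_iff₀ hN]
    nlinarith [mul_nonneg hL hk]
  · refine le_add_of_nonneg_of_le (exp_pos _).le (exp_le_exp.2 ?_)
    rw [neg_le_neg_iff, le_div_iff₀ hN]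
    have hlarge : ω / 2 * N * (N - k) ≤ (1 + ω) * k * (N - k) :=
      mul_le_mul_of_nonneg_right (not_le.1 hsmall).le (by linarith)
    nlinarith [mul_le_mul_of_nonneg_right hlarge hL, mul_nonneg (mul_nonneg hω.le hN.le) hL]

theorem sum_pow_card_le_one_add_pow_sub_one {ι : Type*} [Fintype ι] {𝒜 : Finset (Finset ι)}
    (h𝒜 : ∅ ∉ 𝒜) {x : ℝ} (hx : 0 ≤ x) :
    ∑ S ∈ 𝒜, x ^ #S ≤ (1 + x) ^ Fintype.card ι - 1 := by
  classical
  have hbinom : ∑ S : Finset ι, x ^ #S = (1 + x) ^ Fintype.card ι := by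
    simpa [add_comm] using Fintype.sum_pow_mul_eq_add_pow ι x 1
  calc ∑ S ∈ 𝒜, x ^ #S ≤ ∑ S ∈ univ.erase ∅, x ^ #S :=
        sum_le_sum_of_subset_of_nonneg
          (fun S hS => mem_erase.2 ⟨ne_of_mem_of_not_mem hS h𝒜, mem_univ S⟩)
          fun S _ _ => pow_nonneg hx _
    _ = (1 + x) ^ Fintype.card ι - 1 := by
        rw [← hbinom, ← add_sum_erase univ _ (mem_univ ∅), card_empty, pow_zero,
          add_sub_cancel_left]

open Real in
theorem sum_exp_neg_cut_le {ω : ℝ} (hω : 0 < ω) {n : ℕ} (hn : 0 < n) :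
    ∑ S ∈ smallVertexSets n, exp (-((1 + ω) * Real.log n / n * (#S * (n - #S) : ℕ))) ≤
      (exp (exp (-(ω / 2) * Real.log n)) - 1) + 2 ^ n * exp (-(ω / 4 * (n * Real.log n))) := by
  set x := exp (-((1 + ω / 2) * Real.log n))
  set t := exp (-(ω / 4 * (n * Real.log n)))
  have hterm : ∀ S ∈ smallVertexSets n,
      exp (-((1 + ω) * Real.log n / n * (#S * (n - #S) : ℕ))) ≤ x ^ #S + t := by
    intro S hS
    have hS2 : 2 * #S ≤ n := (mem_filter.1 hS).2.2
    rw [Nat.cast_mul, Nat.cast_sub (by omega)]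
    refine (exp_neg_cut_le hω (Real.log_natCast_nonneg n) (by exact_mod_cast hn)
      (Nat.cast_nonneg _) (by exact_mod_cast hS2)).trans_eq ?_
    rw [← exp_nat_mul]
    congr 2
    ring
  have hnx : n * x = exp (-(ω / 2) * Real.log n) := by
    rw [← exp_log (Nat.cast_pos.2 hn : (0 : ℝ) < n), ← exp_add, log_exp]
    ring_nf
  have hcard : (#(smallVertexSets n) : ℝ) ≤ 2 ^ n := by
    exact_mod_cast (card_le_univ _).trans_eq (by simp)
  calc _ ≤ ∑ S ∈ smallVertexSets n, (x ^ #S + t) := sum_le_sum hterm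
    _ = ∑ S ∈ smallVertexSets n, x ^ #S + #(smallVertexSets n) * t := by
        rw [sum_add_distrib, sum_const, nsmul_eq_mul]
    _ ≤ ((1 + x) ^ n - 1) + 2 ^ n * t := by
        gcongr
        simpa using sum_pow_card_le_one_add_pow_sub_one (ι := Fin n)
          (by simp [smallVertexSets]) (exp_pos _).le
    _ ≤ (exp (exp (-(ω / 2) * Real.log n)) - 1) + 2 ^ n * t := by
        rw [← hnx, exp_nat_mul]
        gcongr
        linarith [add_one_le_exp x]

theorem one_sub_le_ofReal_exp_neg {c : ℝ} {ε : ℝ≥0∞} (hc : ENNReal.ofReal c < ε) :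
    1 - ε ≤ ENNReal.ofReal (Real.exp (-c)) :=
  calc 1 - ε ≤ 1 - ENNReal.ofReal c := tsub_le_tsub_left hc.le 1
    _ ≤ ENNReal.ofReal (1 - c) :=
        tsub_le_iff_right.2 (by simpa using ofReal_add_le (p := 1 - c) (q := c))
    _ ≤ ENNReal.ofReal (Real.exp (-c)) :=
        ofReal_le_ofReal (by linarith [Real.add_one_le_exp (-c)])

theorem gnp_not_connected_le_ofReal {n : ℕ} (hn : 0 < n) {ε : ℝ≥0∞} (hε : ε ≤ 1) {c : ℝ}
    (hc : ENNReal.ofReal c < ε) :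
    gnp n ε hε {ω | ¬ (graphOf ω).Connected} ≤
      ENNReal.ofReal (∑ S ∈ smallVertexSets n, Real.exp (-(c * (#S * (n - #S) : ℕ)))) := by
  refine (gnp_not_connected_le hn ε hε).trans ?_
  rw [ofReal_sum_of_nonneg fun _ _ => (Real.exp_pos _).le]
  gcongr with S
  calc (1 - ε) ^ (#S * (n - #S)) ≤ ENNReal.ofReal (Real.exp (-c)) ^ (#S * (n - #S)) :=
        pow_le_pow_left' (one_sub_le_ofReal_exp_neg hc) _
    _ = ENNReal.ofReal (Real.exp (-(c * (#S * (n - #S) : ℕ)))) := by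
        rw [← ofReal_pow (Real.exp_pos _).le, ← Real.exp_nat_mul, mul_neg, mul_comm]

open Real in
theorem tendsto_connectivity_bound {ω : ℝ} (hω : 0 < ω) :
    Tendsto (fun n : ℕ => (exp (exp (-(ω / 2) * Real.log n)) - 1) +
      2 ^ n * exp (-(ω / 4 * (n * Real.log n)))) atTop (nhds 0) := by
  have hlog : Tendsto (fun n : ℕ => Real.log n) atTop atTop :=
    tendsto_log_atTop.comp tendsto_natCast_atTop_atTop
  have hsmall : Tendsto (fun n : ℕ => exp (exp (-(ω / 2) * Real.log n)) - 1)
      atTop (nhds 0) := by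
    have h := tendsto_exp_atBot.comp (hlog.const_mul_atTop_of_neg (by linarith : -(ω / 2) < 0))
    simpa using ((Real.continuous_exp.tendsto 0).comp h).sub_const 1
  have hlarge : Tendsto (fun n : ℕ => 2 ^ n * exp (-(ω / 4 * (n * Real.log n))))
      atTop (nhds 0) := by
    refine squeeze_zero' (Eventually.of_forall fun n => by positivity) ?_
      (tendsto_exp_atBot.comp (tendsto_neg_atTop_atBot.comp tendsto_natCast_atTop_atTop))
    filter_upwards [(hlog.const_mul_atTop (by positivity : 0 < ω / 4)).eventually_ge_atTop
      (Real.log 2 + 1)] with n hn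
    rw [Function.comp_apply, Function.comp_apply, ← Real.rpow_natCast, rpow_def_of_pos two_pos,
      ← exp_add, exp_le_exp]
    nlinarith [(Nat.cast_nonneg n : (0 : ℝ) ≤ n)]
  simpa using hsmall.add hlarge

/-- Erdős–Rényi connectivity threshold: if ε > (1+ω)·ln n / n for a fixed
ω > 0, then G(n, ε) is connected with probability tending to 1. -/
theorem stmt12 (ω : ℝ) (hω : 0 < ω) (ε : ℕ → ℝ≥0∞) (hε : ∀ n, ε n ≤ 1)
    (hlb : ∀ n : ℕ, ENNReal.ofReal ((1 + ω) * Real.log n / n) < ε n) :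
    Tendsto (fun n => connProb n (ε n) (hε n)) atTop (nhds 1) := by
  have hdisconnected : Tendsto (fun n => gnp n (ε n) (hε n) {ω' | ¬ (graphOf ω').Connected})
      atTop (nhds 0) := by
    refine tendsto_of_tendsto_of_tendsto_of_le_of_le' tendsto_const_nhds
      (by simpa only [ofReal_zero] using ENNReal.tendsto_ofReal (tendsto_connectivity_bound hω))
      (Eventually.of_forall fun _ => bot_le) ?_
    filter_upwards [eventually_gt_atTop 0] with n hn
    exact (gnp_not_connected_le_ofReal hn (hε n) (hlb n)).trans
      (ofReal_le_ofReal (sum_exp_neg_cut_le hω hn))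
  have hcompl : ∀ n, connProb n (ε n) (hε n) =
      1 - gnp n (ε n) (hε n) {ω' | ¬ (graphOf ω').Connected} := fun n => by
    rw [← prob_compl_eq_one_sub (Set.toFinite _).measurableSet, connProb, Set.compl_ofPred]
    simp only [not_not]
  simpa [hcompl] using ENNReal.Tendsto.sub tendsto_const_nhds hdisconnected (.inl one_ne_top)

end
end

section
/- Mask-recovery correctness for the aggregate: let S be the set of clients, Q ⊆ S the online clients whose masked vectors the server receives, where client i sends Vec_i = x_i + PRG(m_i) + Σ_{j∈A(i)∩S, i<j} P_{i,j} − Σ_{j∈A(i)∩S, i>j} P_{i,j} (with P_{i,j} = P_{j,i}). If the server computes z̃ = Σ_{i∈Q} Vec_i, then subtracts PRG(m_i) for every i ∈ Q, and for every offline i ∈ S\Q and each online neighbor j ∈ A(i)∩Q adds or subtracts P_{i,j} with the appropriate sign (opposite to the sign used by j), the result equals Σ_{i∈Q} x_i. -/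
/-- Mask-recovery correctness for the aggregate: subtracting the individual
masks of online clients and cancelling the dangling pairwise masks of offline
clients recovers the sum of the online clients' inputs. -/
theorem stmt16 {ι V : Type*} [Fintype ι] [LinearOrder ι] [AddCommGroup V]
    (S Q : Finset ι) (hQS : Q ⊆ S)
    (A : ι → Finset ι) (hsymm : ∀ i j, j ∈ A i ↔ i ∈ A j) (hirr : ∀ i, i ∉ A i)
    (x m : ι → V) (Pm : ι → ι → V) (hP : ∀ i j, Pm i j = Pm j i)
    (Vec : ι → V)
    (hVec : ∀ i ∈ Q, Vec i = x i + m i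
      + ∑ j ∈ (A i ∩ S).filter (fun j => i < j), Pm i j
      - ∑ j ∈ (A i ∩ S).filter (fun j => j < i), Pm i j) :
    (∑ i ∈ Q, Vec i) - (∑ i ∈ Q, m i)
      + ∑ i ∈ S \ Q, (∑ j ∈ (A i ∩ Q).filter (fun j => i < j), Pm i j
          - ∑ j ∈ (A i ∩ Q).filter (fun j => j < i), Pm i j)
      = ∑ i ∈ Q, x i := by
  classical
  set G : ι → ι → V := fun i j =>
    if j ∈ A i then (if i < j then Pm i j else if j < i then - Pm i j else 0) else 0 with hG
  have hGanti : ∀ i j, G j i = - G i j := by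
    intro i j
    simp only [hG]
    by_cases h : j ∈ A i
    · rw [if_pos h, if_pos ((hsymm i j).mp h)]
      rcases lt_trichotomy i j with h1 | h1 | h1
      · rw [if_pos h1, if_neg (not_lt.mpr h1.le), if_pos h1, hP j i]
      · subst h1; exact absurd h (hirr i)
      · rw [if_pos h1, if_neg (not_lt.mpr h1.le), if_pos h1, hP j i, neg_neg]
    · rw [if_neg h, if_neg (fun h' => h ((hsymm i j).mpr h')), neg_zero]
  have key : ∀ (i : ι) (T : Finset ι),
      (∑ j ∈ (A i ∩ T).filter (fun j => i < j), Pm i j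
        - ∑ j ∈ (A i ∩ T).filter (fun j => j < i), Pm i j) = ∑ j ∈ T, G i j := by
    intro i T
    have h0 : ∑ j ∈ T, G i j
        = ∑ j ∈ T.filter (fun j => j ∈ A i),
            (if i < j then Pm i j else if j < i then - Pm i j else 0) := by
      rw [Finset.sum_filter]
    have h1 : T.filter (fun j => j ∈ A i) = A i ∩ T := by
      rw [Finset.filter_mem_eq_inter, Finset.inter_comm]
    rw [h0, h1]
    set s := A i ∩ T with hs
    rw [← Finset.sum_filter_add_sum_filter_not s (fun j => i < j)
        (fun j => if i < j then Pm i j else if j < i then - Pm i j else 0)]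
    have h2 : ∑ j ∈ s.filter (fun j => i < j),
        (if i < j then Pm i j else if j < i then - Pm i j else 0)
        = ∑ j ∈ s.filter (fun j => i < j), Pm i j := by
      apply Finset.sum_congr rfl
      intro j hj
      rw [if_pos (Finset.mem_filter.mp hj).2]
    have hne : ∀ j ∈ s, j ≠ i := by
      intro j hj hji
      subst hji
      exact hirr j (Finset.mem_of_mem_inter_left hj)
    have h3 : s.filter (fun j => ¬ i < j) = s.filter (fun j => j < i) := by
      apply Finset.filter_congr
      intro j hj
      simp only [not_lt]
      exact ⟨fun h => lt_of_le_of_ne h (hne j hj), fun h => h.le⟩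
    have h4 : ∑ j ∈ s.filter (fun j => ¬ i < j),
        (if i < j then Pm i j else if j < i then - Pm i j else 0)
        = - ∑ j ∈ s.filter (fun j => j < i), Pm i j := by
      rw [h3, ← Finset.sum_neg_distrib]
      apply Finset.sum_congr rfl
      intro j hj
      have hlt := (Finset.mem_filter.mp hj).2
      rw [if_neg (not_lt.mpr hlt.le), if_pos hlt]
    rw [h2, h4]
    abel
  have hVec' : ∀ i ∈ Q, Vec i = x i + m i + ∑ j ∈ S, G i j := by
    intro i hi
    rw [hVec i hi, add_sub_assoc, key i S]
  have hQQ : ∑ i ∈ Q, ∑ j ∈ Q, G i j = 0 := by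
    rw [← Finset.sum_product']
    apply Finset.sum_involution (fun p _ => (p.2, p.1))
    · intro p _
      simp only
      rw [hGanti p.1 p.2]
      abel
    · intro p _ hp hcontra
      apply hp
      have h1 : p.1 = p.2 := congrArg Prod.snd hcontra
      rw [h1, hGanti p.2 p.2]
      have : G p.2 p.2 = - G p.2 p.2 := hGanti p.2 p.2
      have h2 : G p.2 p.2 = 0 := by
        simp only [hG, lt_irrefl, if_false, if_neg (hirr p.2)]
      rw [h2, neg_zero]
    · intro p hp
      rw [Finset.mem_product] at hp ⊢
      exact ⟨hp.2, hp.1⟩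
    · intro p _; rfl
  have hcross : ∑ i ∈ Q, ∑ j ∈ S \ Q, G i j + ∑ i ∈ S \ Q, ∑ j ∈ Q, G i j = 0 := by
    have : ∑ i ∈ S \ Q, ∑ j ∈ Q, G i j = - ∑ i ∈ Q, ∑ j ∈ S \ Q, G i j := by
      rw [Finset.sum_comm]
      rw [← Finset.sum_neg_distrib]
      apply Finset.sum_congr rfl
      intro i _
      rw [← Finset.sum_neg_distrib]
      exact Finset.sum_congr rfl fun j _ => hGanti i j
    rw [this]; abel
  calc (∑ i ∈ Q, Vec i) - (∑ i ∈ Q, m i)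
      + ∑ i ∈ S \ Q, (∑ j ∈ (A i ∩ Q).filter (fun j => i < j), Pm i j
          - ∑ j ∈ (A i ∩ Q).filter (fun j => j < i), Pm i j)
      = (∑ i ∈ Q, (x i + m i + ∑ j ∈ S, G i j)) - (∑ i ∈ Q, m i)
        + ∑ i ∈ S \ Q, ∑ j ∈ Q, G i j := by
        rw [Finset.sum_congr rfl hVec', Finset.sum_congr rfl (fun i _ => key i Q)]
    _ = ∑ i ∈ Q, x i + ∑ i ∈ Q, m i + ∑ i ∈ Q, ∑ j ∈ S, G i j - (∑ i ∈ Q, m i)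
        + ∑ i ∈ S \ Q, ∑ j ∈ Q, G i j := by
        rw [Finset.sum_add_distrib, Finset.sum_add_distrib]
    _ = ∑ i ∈ Q, x i + (∑ i ∈ Q, ∑ j ∈ S, G i j + ∑ i ∈ S \ Q, ∑ j ∈ Q, G i j) := by
        abel
    _ = ∑ i ∈ Q, x i := by
        have hsplit : ∀ i, ∑ j ∈ S, G i j = ∑ j ∈ S \ Q, G i j + ∑ j ∈ Q, G i j :=
          fun i => (Finset.sum_sdiff hQS).symm
        rw [Finset.sum_congr rfl (fun i _ => hsplit i), Finset.sum_add_distrib]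
        rw [show ∑ i ∈ Q, ∑ j ∈ S \ Q, G i j + ∑ i ∈ Q, ∑ j ∈ Q, G i j
            + ∑ i ∈ S \ Q, ∑ j ∈ Q, G i j
            = (∑ i ∈ Q, ∑ j ∈ Q, G i j)
              + (∑ i ∈ Q, ∑ j ∈ S \ Q, G i j + ∑ i ∈ S \ Q, ∑ j ∈ Q, G i j) by abel]
        rw [hQQ, hcross]
        abel
end

section
/- Soundness of the equal-discrete-log check: in a cyclic group G of prime order q with c_0 ≠ 1 and g a generator, if for two distinct challenges e ≠ e' there exist responses z, z' satisfying A^e·B = c_0^z, C^e·D = g^z, A^{e'}·B = c_0^{z'}, and C^{e'}·D = g^{z'} (for fixed A, B, C, D ∈ G), then log_{c_0} A = log_g C; i.e., there is a single s ∈ Z_q with A = c_0^s and C = g^s. -/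
theorem stmt18_aux {G : Type*} [CommGroup G] [Fintype G] (q : ℕ) [Fact q.Prime]
    (x : G) (hx : orderOf x = q) (m n : ℕ) (h : x ^ m = x ^ n) :
    (m : ZMod q) = n := by
  rw [pow_eq_pow_iff_modEq, hx] at h
  exact (ZMod.natCast_eq_natCast_iff _ _ _).mpr h

/-- Soundness of the equal-discrete-log check: accepting transcripts for two
distinct challenges force a common exponent s = (z−z')/(e−e'). -/
theorem stmt18 {G : Type*} [CommGroup G] [Fintype G] (q : ℕ) [Fact q.Prime]
    (hcard : Fintype.card G = q) [IsCyclic G]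
    (g c0 : G) (hg : ∀ x : G, x ∈ Subgroup.zpowers g) (hc0 : c0 ≠ 1)
    (A B Cc D : G) (e e' z z' : ZMod q) (hee : e ≠ e')
    (h1 : A ^ e.val * B = c0 ^ z.val) (h2 : Cc ^ e.val * D = g ^ z.val)
    (h3 : A ^ e'.val * B = c0 ^ z'.val) (h4 : Cc ^ e'.val * D = g ^ z'.val) :
    ∃ s : ZMod q, A = c0 ^ s.val ∧ Cc = g ^ s.val ∧ s = (z - z') / (e - e') := by
  have hq : q.Prime := Fact.out
  have hq1 : ∀ x : G, x ^ q = 1 := by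
    intro x; rw [← hcard]; exact pow_card_eq_one
  have hoc : orderOf c0 = q := orderOf_eq_prime (hq1 c0) hc0
  have hg1 : g ≠ 1 := by
    intro h
    obtain ⟨k, hk⟩ := hg c0
    rw [h] at hk
    simp at hk
    exact hc0 hk.symm
  have hog : orderOf g = q := orderOf_eq_prime (hq1 g) hg1
  have hc0top : ∀ x : G, x ∈ Subgroup.zpowers c0 := by
    have : Subgroup.zpowers c0 = ⊤ := by
      apply Subgroup.eq_top_of_card_eq
      rw [Nat.card_zpowers, hoc, Nat.card_eq_fintype_card, hcard]
    intro x; rw [this]; trivial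
  -- natural number exponents
  obtain ⟨a, ha⟩ := (mem_powers_iff_mem_zpowers).mpr (hc0top A)
  obtain ⟨b, hb⟩ := (mem_powers_iff_mem_zpowers).mpr (hc0top B)
  obtain ⟨c, hcc⟩ := (mem_powers_iff_mem_zpowers).mpr (hg Cc)
  obtain ⟨d, hd⟩ := (mem_powers_iff_mem_zpowers).mpr (hg D)
  simp only at ha hb hcc hd
  have E1 : ((a * e.val + b : ℕ) : ZMod q) = ((z.val : ℕ) : ZMod q) := by
    apply stmt18_aux q c0 hoc
    rw [pow_add, pow_mul, ha, hb, h1]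
  have E2 : ((c * e.val + d : ℕ) : ZMod q) = ((z.val : ℕ) : ZMod q) := by
    apply stmt18_aux q g hog
    rw [pow_add, pow_mul, hcc, hd, h2]
  have E3 : ((a * e'.val + b : ℕ) : ZMod q) = ((z'.val : ℕ) : ZMod q) := by
    apply stmt18_aux q c0 hoc
    rw [pow_add, pow_mul, ha, hb, h3]
  have E4 : ((c * e'.val + d : ℕ) : ZMod q) = ((z'.val : ℕ) : ZMod q) := by
    apply stmt18_aux q g hog
    rw [pow_add, pow_mul, hcc, hd, h4]
  push_cast at E1 E2 E3 E4
  simp only [ZMod.natCast_val, ZMod.cast_id] at E1 E2 E3 E4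
  have hsub : e - e' ≠ 0 := sub_ne_zero.mpr hee
  have hA : (a : ZMod q) = (z - z') / (e - e') := by
    field_simp
    linear_combination E1 - E3
  have hC : (c : ZMod q) = (z - z') / (e - e') := by
    field_simp
    linear_combination E2 - E4
  refine ⟨(z - z') / (e - e'), ?_, ?_, rfl⟩
  · rw [← hA, ZMod.val_natCast, ← pow_eq_pow_mod a (hq1 c0), ha]
  · rw [← hC, ZMod.val_natCast, ← pow_eq_pow_mod c (hq1 g), hcc]
end
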